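/- Let g2, g3 ∈ ℂ and let p : ℝ → ℂ be infinitely differentiable satisfying both (p′(x))² = 4 p(x)³ − g2 p(x) − g3 and p″(x) = 6 p(x)² − (1/2) g2 for all x ∈ ℝ. Define, for infinitely differentiable ψ : ℝ → ℂ, (L3ψ)(x) = ψ‴(x) − 3 p(x) ψ′(x) − (3/2) p′(x) ψ(x) and (P2ψ)(x) = ψ″(x) − 2 p(x) ψ(x). Then for every infinitely differentiable ψ and every x ∈ ℝ: P2(P2(P2ψ))(x) − (g2/4)(P2ψ)(x) − L3(L3ψ)(x) − (g3/4) ψ(x) = 0; that is, the pair (L3, P2) satisfies the Burchnall–Chaundy relation y³ − (g2/4) y − z² − g3/4 = 0. -/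

import Mathlib

open scoped ContDiff

/-- The Boussinesq Lax expression `L₃` specialized to the elliptic potentials
`q₁ = -3p`, `q₀ = 0`: `L₃ψ = ψ''' - 3pψ' - (3/2)p'ψ`. -/
noncomputable def L3ell (p ψ : ℝ → ℂ) : ℝ → ℂ :=
  fun x => iteratedDeriv 3 ψ x - 3 * p x * deriv ψ x
    - (3 / 2 : ℂ) * deriv p x * ψ x

/-- `P₂` specialized to the elliptic potential `q₁ = -3p`:
`P₂ψ = ψ'' - 2pψ`. -/
noncomputable def P2ell (p ψ : ℝ → ℂ) : ℝ → ℂ :=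
  fun x => iteratedDeriv 2 ψ x - 2 * p x * ψ x

/-- For Weierstrass-type `p`, the elliptic Lax pair `(L₃, P₂)` satisfies the
Burchnall-Chaundy relation `y³ - (g₂/4)y - z² - g₃/4 = 0`. -/
theorem elliptic_burchnall_chaundy
    (g2 g3 : ℂ) (p : ℝ → ℂ) (hp : ContDiff ℝ (⊤ : ℕ∞) p)
    (hode1 : ∀ x : ℝ, (deriv p x) ^ 2 = 4 * (p x) ^ 3 - g2 * p x - g3)
    (hode2 : ∀ x : ℝ, iteratedDeriv 2 p x = 6 * (p x) ^ 2 - (1 / 2) * g2) :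
    ∀ ψ : ℝ → ℂ, ContDiff ℝ (⊤ : ℕ∞) ψ → ∀ x : ℝ,
      P2ell p (P2ell p (P2ell p ψ)) x - (g2 / 4) * P2ell p ψ x
        - L3ell p (L3ell p ψ) x - (g3 / 4) * ψ x = 0 := by
  intro ψ hψ x
  have step : ∀ f : ℝ → ℂ, ContDiff ℝ ∞ f → ContDiff ℝ ∞ (deriv f) :=
    fun f hf => (contDiff_infty_iff_deriv.mp hf).2
  have dstep : ∀ f : ℝ → ℂ, ContDiff ℝ ∞ f → Differentiable ℝ f :=
    fun f hf => (contDiff_infty_iff_deriv.mp hf).1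
  have hp0 : ContDiff ℝ ∞ p := hp.of_le (by simp)
  have hp1 := step _ hp0
  have hp2 := step _ hp1
  have hp3 := step _ hp2
  have hψ0 : ContDiff ℝ ∞ ψ := hψ.of_le (by simp)
  have hψ1 := step _ hψ0
  have hψ2 := step _ hψ1
  have hψ3 := step _ hψ2
  have hψ4 := step _ hψ3
  have hψ5 := step _ hψ4
  have dp0 := dstep _ hp0
  have dp1 := dstep _ hp1
  have dp2 := dstep _ hp2
  have dp3 := dstep _ hp3
  have dψ0 := dstep _ hψ0
  have dψ1 := dstep _ hψ1
  have dψ2 := dstep _ hψ2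
  have dψ3 := dstep _ hψ3
  have dψ4 := dstep _ hψ4
  have dψ5 := dstep _ hψ5
  have h2 : deriv (deriv p) = fun y => 6 * (p y * p y) - 1 / 2 * g2 := by
    funext y
    have h := hode2 y
    simp only [iteratedDeriv_succ, iteratedDeriv_zero] at h
    rw [h]; ring
  have eA : P2ell p ψ = fun y : ℝ => 1 * ((deriv (deriv ψ)) y)
        + (-2) * (p y) * (ψ y) := by
    funext y
    show iteratedDeriv 2 ψ y - 2 * p y * ψ y = _
    simp only [iteratedDeriv_succ, iteratedDeriv_zero]
    ring
  have hA1 : deriv (fun y : ℝ => 1 * ((deriv (deriv ψ)) y)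
        + (-2) * (p y) * (ψ y))
      = fun y : ℝ => 1 * ((deriv (deriv (deriv ψ))) y)
        + (-2) * (deriv p y) * (ψ y)
        + (-2) * (p y) * (deriv ψ y) := by
    funext y
    simp (disch := fun_prop) only [deriv_add, deriv_sub, deriv_mul, deriv_fun_add, deriv_fun_sub, deriv_fun_mul, deriv_const_mul,
      deriv_const']
    try simp only [h2]
    ring
  have hA2 : deriv (fun y : ℝ => 1 * ((deriv (deriv (deriv ψ))) y)
        + (-2) * (deriv p y) * (ψ y)
        + (-2) * (p y) * (deriv ψ y))
      = fun y : ℝ => 1 * ((deriv (deriv (deriv (deriv ψ)))) y)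
        + 1 * (ψ y) * g2
        + (-4) * (deriv p y) * (deriv ψ y)
        + (-2) * (p y) * ((deriv (deriv ψ)) y)
        + (-12) * (p y) * (p y) * (ψ y) := by
    funext y
    simp (disch := fun_prop) only [deriv_add, deriv_sub, deriv_mul, deriv_fun_add, deriv_fun_sub, deriv_fun_mul, deriv_const_mul,
      deriv_const']
    try simp only [h2]
    ring
  have eB : P2ell p (P2ell p ψ) = fun y : ℝ => 1 * ((deriv (deriv (deriv (deriv ψ)))) y)
        + 1 * (ψ y) * g2
        + (-4) * (deriv p y) * (deriv ψ y)
        + (-4) * (p y) * ((deriv (deriv ψ)) y)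
        + (-8) * (p y) * (p y) * (ψ y) := by
    funext y
    show iteratedDeriv 2 (P2ell p ψ) y - 2 * p y * P2ell p ψ y = _
    simp only [eA, iteratedDeriv_succ, iteratedDeriv_zero, hA1, hA2]
    ring
  have hB1 : deriv (fun y : ℝ => 1 * ((deriv (deriv (deriv (deriv ψ)))) y)
        + 1 * (ψ y) * g2
        + (-4) * (deriv p y) * (deriv ψ y)
        + (-4) * (p y) * ((deriv (deriv ψ)) y)
        + (-8) * (p y) * (p y) * (ψ y))
      = fun y : ℝ => 1 * ((deriv (deriv (deriv (deriv (deriv ψ))))) y)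
        + 3 * (deriv ψ y) * g2
        + (-8) * (deriv p y) * ((deriv (deriv ψ)) y)
        + (-4) * (p y) * ((deriv (deriv (deriv ψ))) y)
        + (-16) * (p y) * (deriv p y) * (ψ y)
        + (-32) * (p y) * (p y) * (deriv ψ y) := by
    funext y
    simp (disch := fun_prop) only [deriv_add, deriv_sub, deriv_mul, deriv_fun_add, deriv_fun_sub, deriv_fun_mul, deriv_const_mul,
      deriv_const']
    try simp only [h2]
    ring
  have hB2 : deriv (fun y : ℝ => 1 * ((deriv (deriv (deriv (deriv (deriv ψ))))) y)
        + 3 * (deriv ψ y) * g2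
        + (-8) * (deriv p y) * ((deriv (deriv ψ)) y)
        + (-4) * (p y) * ((deriv (deriv (deriv ψ))) y)
        + (-16) * (p y) * (deriv p y) * (ψ y)
        + (-32) * (p y) * (p y) * (deriv ψ y))
      = fun y : ℝ => 1 * ((deriv (deriv (deriv (deriv (deriv (deriv ψ)))))) y)
        + 7 * ((deriv (deriv ψ)) y) * g2
        + (-12) * (deriv p y) * ((deriv (deriv (deriv ψ))) y)
        + (-16) * (deriv p y) * (deriv p y) * (ψ y)
        + (-4) * (p y) * ((deriv (deriv (deriv (deriv ψ)))) y)
        + 8 * (p y) * (ψ y) * g2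
        + (-80) * (p y) * (deriv p y) * (deriv ψ y)
        + (-80) * (p y) * (p y) * ((deriv (deriv ψ)) y)
        + (-96) * (p y) * (p y) * (p y) * (ψ y) := by
    funext y
    simp (disch := fun_prop) only [deriv_add, deriv_sub, deriv_mul, deriv_fun_add, deriv_fun_sub, deriv_fun_mul, deriv_const_mul,
      deriv_const']
    try simp only [h2]
    ring
  have eC : P2ell p (P2ell p (P2ell p ψ)) x = 1 * ((deriv (deriv (deriv (deriv (deriv (deriv ψ)))))) x)
      + 7 * ((deriv (deriv ψ)) x) * g2
      + (-12) * (deriv p x) * ((deriv (deriv (deriv ψ))) x)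
      + (-16) * (deriv p x) * (deriv p x) * (ψ x)
      + (-6) * (p x) * ((deriv (deriv (deriv (deriv ψ)))) x)
      + 6 * (p x) * (ψ x) * g2
      + (-72) * (p x) * (deriv p x) * (deriv ψ x)
      + (-72) * (p x) * (p x) * ((deriv (deriv ψ)) x)
      + (-80) * (p x) * (p x) * (p x) * (ψ x) := by
    show iteratedDeriv 2 (P2ell p (P2ell p ψ)) x - 2 * p x * P2ell p (P2ell p ψ) x = _
    simp only [eB, iteratedDeriv_succ, iteratedDeriv_zero, hB1, hB2]
    ring
  have eL : L3ell p ψ = fun y : ℝ => 1 * ((deriv (deriv (deriv ψ))) y)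
        + ((-3) / 2 : ℂ) * (deriv p y) * (ψ y)
        + (-3) * (p y) * (deriv ψ y) := by
    funext y
    show iteratedDeriv 3 ψ y - 3 * p y * deriv ψ y - (3 / 2 : ℂ) * deriv p y * ψ y = _
    simp only [iteratedDeriv_succ, iteratedDeriv_zero]
    ring
  have hL1 : deriv (fun y : ℝ => 1 * ((deriv (deriv (deriv ψ))) y)
        + ((-3) / 2 : ℂ) * (deriv p y) * (ψ y)
        + (-3) * (p y) * (deriv ψ y))
      = fun y : ℝ => 1 * ((deriv (deriv (deriv (deriv ψ)))) y)
        + (3 / 4 : ℂ) * (ψ y) * g2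
        + ((-9) / 2 : ℂ) * (deriv p y) * (deriv ψ y)
        + (-3) * (p y) * ((deriv (deriv ψ)) y)
        + (-9) * (p y) * (p y) * (ψ y) := by
    funext y
    simp (disch := fun_prop) only [deriv_add, deriv_sub, deriv_mul, deriv_fun_add, deriv_fun_sub, deriv_fun_mul, deriv_const_mul,
      deriv_const']
    try simp only [h2]
    ring
  have hL2 : deriv (fun y : ℝ => 1 * ((deriv (deriv (deriv (deriv ψ)))) y)
        + (3 / 4 : ℂ) * (ψ y) * g2
        + ((-9) / 2 : ℂ) * (deriv p y) * (deriv ψ y)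
        + (-3) * (p y) * ((deriv (deriv ψ)) y)
        + (-9) * (p y) * (p y) * (ψ y))
      = fun y : ℝ => 1 * ((deriv (deriv (deriv (deriv (deriv ψ))))) y)
        + 3 * (deriv ψ y) * g2
        + ((-15) / 2 : ℂ) * (deriv p y) * ((deriv (deriv ψ)) y)
        + (-3) * (p y) * ((deriv (deriv (deriv ψ))) y)
        + (-18) * (p y) * (deriv p y) * (ψ y)
        + (-36) * (p y) * (p y) * (deriv ψ y) := by
    funext y
    simp (disch := fun_prop) only [deriv_add, deriv_sub, deriv_mul, deriv_fun_add, deriv_fun_sub, deriv_fun_mul, deriv_const_mul,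
      deriv_const']
    try simp only [h2]
    ring
  have hL3 : deriv (fun y : ℝ => 1 * ((deriv (deriv (deriv (deriv (deriv ψ))))) y)
        + 3 * (deriv ψ y) * g2
        + ((-15) / 2 : ℂ) * (deriv p y) * ((deriv (deriv ψ)) y)
        + (-3) * (p y) * ((deriv (deriv (deriv ψ))) y)
        + (-18) * (p y) * (deriv p y) * (ψ y)
        + (-36) * (p y) * (p y) * (deriv ψ y))
      = fun y : ℝ => 1 * ((deriv (deriv (deriv (deriv (deriv (deriv ψ)))))) y)
        + (27 / 4 : ℂ) * ((deriv (deriv ψ)) y) * g2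
        + ((-21) / 2 : ℂ) * (deriv p y) * ((deriv (deriv (deriv ψ))) y)
        + (-18) * (deriv p y) * (deriv p y) * (ψ y)
        + (-3) * (p y) * ((deriv (deriv (deriv (deriv ψ)))) y)
        + 9 * (p y) * (ψ y) * g2
        + (-90) * (p y) * (deriv p y) * (deriv ψ y)
        + (-81) * (p y) * (p y) * ((deriv (deriv ψ)) y)
        + (-108) * (p y) * (p y) * (p y) * (ψ y) := by
    funext y
    simp (disch := fun_prop) only [deriv_add, deriv_sub, deriv_mul, deriv_fun_add, deriv_fun_sub, deriv_fun_mul, deriv_const_mul,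
      deriv_const']
    try simp only [h2]
    ring
  have eLL : L3ell p (L3ell p ψ) x = 1 * ((deriv (deriv (deriv (deriv (deriv (deriv ψ)))))) x)
      + (27 / 4 : ℂ) * ((deriv (deriv ψ)) x) * g2
      + (-12) * (deriv p x) * ((deriv (deriv (deriv ψ))) x)
      + ((-63) / 4 : ℂ) * (deriv p x) * (deriv p x) * (ψ x)
      + (-6) * (p x) * ((deriv (deriv (deriv (deriv ψ)))) x)
      + (27 / 4 : ℂ) * (p x) * (ψ x) * g2
      + (-72) * (p x) * (deriv p x) * (deriv ψ x)
      + (-72) * (p x) * (p x) * ((deriv (deriv ψ)) x)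
      + (-81) * (p x) * (p x) * (p x) * (ψ x) := by
    show iteratedDeriv 3 (L3ell p ψ) x - 3 * p x * deriv (L3ell p ψ) x
      - (3 / 2 : ℂ) * deriv p x * L3ell p ψ x = _
    simp only [eL, iteratedDeriv_succ, iteratedDeriv_zero, hL1, hL2, hL3]
    ring
  have eA' : P2ell p ψ x = deriv (deriv ψ) x - 2 * p x * ψ x := by
    show iteratedDeriv 2 ψ x - 2 * p x * ψ x = _
    simp only [iteratedDeriv_succ, iteratedDeriv_zero]
  rw [eC, eLL, eA']
  linear_combination (-(ψ x) / 4) * hode1 x
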